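/- arXiv:1211.1894 — 2 statements merged into one kernel-verified Lean document; each statement's English description precedes it below -/
import Mathlib

section
/- In the setting of the finite-state Poisson equation, the solution admits the probabilistic representation Φ(r) = ∫₀^∞ E_r[g(X_s)] ds, where (X_s) is the Markov chain generated by B started from r, g is centered with respect to the stationary measure μ, and the convergence E_r[Φ(X_t)] → ∫ Φ dμ = 0 as t → ∞ holds. Equivalently, in matrix form: if B has kernel spanned by 1, μB = 0, μg = 0, and e^{tB}g → 0 as t → ∞, then Φ = ∫₀^∞ e^{sB} g ds satisfies BΦ = -g and μΦ = 0. -/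
/-!
Write `u t = e^{tB} g`. The vectors whose orbit under the semigroup `e^{tB}` tends to `0` form an
invariant subspace; it is finite-dimensional, so the convergence is uniform on it, some `e^{TB}`
halves every norm there, and `u` decays exponentially, hence is integrable on `(0, ∞)`. Then
`B ∫ u = ∫ u' = lim u - u 0 = -g`. Finally `μ ⬝ᵥ u t` has derivative `(μ B) ⬝ᵥ u t = 0` and tends
to `0`, so it vanishes identically and `μ ⬝ᵥ ∫ u = 0`.
-/

open Filter Topology Set Asymptotics Real MeasureTheory

theorem ContinuousLinearMap.tendsto_nhds_zero_of_forall_tendsto_apply {𝕜 E F α : Type*}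
    [NontriviallyNormedField 𝕜] [CompleteSpace 𝕜] [NormedAddCommGroup E] [NormedSpace 𝕜 E]
    [FiniteDimensional 𝕜 E] [NormedAddCommGroup F] [NormedSpace 𝕜 F] {l : Filter α}
    {u : α → E →L[𝕜] F} (h : ∀ x, Tendsto (fun a => u a x) l (𝓝 0)) :
    Tendsto u l (𝓝 0) := by
  let b := Module.finBasis 𝕜 E
  obtain ⟨C, -, hC⟩ := b.exists_opNorm_le (F := F)
  have hsum : Tendsto (fun a => C * ∑ i, ‖u a (b i)‖) l (𝓝 0) := by
    simpa using (tendsto_finsetSum _ fun i _ => (h (b i)).norm).const_mul C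
  refine squeeze_zero_norm (fun a => hC (by positivity) fun i => ?_) hsum
  exact Finset.single_le_sum (f := fun i => ‖u a (b i)‖) (fun _ _ => norm_nonneg _)
    (Finset.mem_univ i)

theorem isBigO_exp_of_norm_add_le {F : Type*} [NormedAddCommGroup F] {u : ℝ → F} {T q : ℝ}
    (hT : 0 < T) (hq₀ : 0 < q) (hq₁ : q ≤ 1) (hu : ContinuousOn u (Icc 0 T))
    (hstep : ∀ t ≥ 0, ‖u (t + T)‖ ≤ q * ‖u t‖) :
    u =O[atTop] fun t => exp (log q / T * t) := by
  obtain ⟨K, hK⟩ := isCompact_Icc.exists_bound_of_continuousOn hu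
  have hK₀ : 0 ≤ K := (norm_nonneg _).trans (hK 0 ⟨le_rfl, hT.le⟩)
  have hiter : ∀ n : ℕ, ∀ r ≥ 0, ‖u (r + n * T)‖ ≤ q ^ n * ‖u r‖ := by
    intro n r hr
    induction n with
    | zero => simp
    | succ n ih =>
      calc ‖u (r + (n + 1 : ℕ) * T)‖ = ‖u ((r + n * T) + T)‖ := by push_cast; ring_nf
        _ ≤ q * ‖u (r + n * T)‖ := hstep _ (by positivity)
        _ ≤ q * (q ^ n * ‖u r‖) := by gcongr
        _ = q ^ (n + 1) * ‖u r‖ := by ring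
  refine IsBigO.of_bound (K * q⁻¹) ?_
  filter_upwards [eventually_ge_atTop 0] with t ht
  set n := ⌊t / T⌋₊
  have hnT : n * T ≤ t := (le_div_iff₀ hT).mp (Nat.floor_le (by positivity))
  have htT : t < (n + 1) * T := (div_lt_iff₀ hT).mp (Nat.lt_floor_add_one _)
  have htn : t / T - 1 ≤ n := by linarith [Nat.lt_floor_add_one (t / T)]
  have hpow : q ^ n ≤ q⁻¹ * exp (log q / T * t) := calc
    q ^ n = q ^ (n : ℝ) := (rpow_natCast q n).symm
    _ ≤ q ^ (t / T - 1) := rpow_le_rpow_of_exponent_ge hq₀ hq₁ htn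
    _ = q⁻¹ * exp (log q / T * t) := by
      rw [rpow_sub_one hq₀.ne', rpow_def_of_pos hq₀]; ring_nf
  calc ‖u t‖ = ‖u ((t - n * T) + n * T)‖ := by rw [sub_add_cancel]
    _ ≤ q ^ n * ‖u (t - n * T)‖ := hiter n _ (by linarith)
    _ ≤ (q⁻¹ * exp (log q / T * t)) * K := by
      gcongr
      exact hK _ ⟨by linarith, by linarith⟩
    _ = K * q⁻¹ * ‖exp (log q / T * t)‖ := by rw [norm_of_nonneg (exp_pos _).le]; ring

theorem integrableOn_Ioi_of_isBigO_exp {F : Type*} [NormedAddCommGroup F] {u : ℝ → F} {a c : ℝ}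
    (hc : c < 0) (hu : ContinuousOn u (Ici a)) (ho : u =O[atTop] fun t => exp (c * t)) :
    IntegrableOn u (Ioi a) :=
  (integrableOn_Ici_iff_integrableOn_Ioi (by finiteness)).mp <|
    (hu.locallyIntegrableOn measurableSet_Ici).integrableOn_of_isBigO_atTop ho
      ⟨Ioi 0, Ioi_mem_atTop 0, by simpa using exp_neg_integrableOn_Ioi 0 (neg_pos.2 hc)⟩

section Semigroup

variable {E : Type*} [NormedAddCommGroup E] [NormedSpace ℝ E] {S : ℝ → Module.End ℝ E}

def decaySubmodule (S : ℝ → Module.End ℝ E) : Submodule ℝ E where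
  carrier := {v | Tendsto (fun t => S t v) atTop (𝓝 0)}
  add_mem' hv hw := by simpa using hv.add hw
  zero_mem' := by simp
  smul_mem' c _ hv := by simpa using hv.const_smul c

theorem mem_decaySubmodule {v : E} :
    v ∈ decaySubmodule S ↔ Tendsto (fun t => S t v) atTop (𝓝 0) := Iff.rfl

variable [FiniteDimensional ℝ E]

theorem apply_mem_decaySubmodule (hS : ∀ s t, S (s + t) = S s * S t) {v : E}
    (hv : v ∈ decaySubmodule S) (s : ℝ) : S s v ∈ decaySubmodule S := by
  have hcomm : ∀ t, S t (S s v) = S s (S t v) := fun t => by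
    rw [← Module.End.mul_apply, ← hS, add_comm, hS, Module.End.mul_apply]
  simpa [mem_decaySubmodule, hcomm, Function.comp_def] using
    ((S s).continuous_of_finiteDimensional.tendsto' 0 0 (map_zero _)).comp hv

theorem eventually_norm_apply_le_of_mem_decaySubmodule {ε : ℝ} (hε : 0 < ε) :
    ∀ᶠ t in atTop, ∀ v ∈ decaySubmodule S, ‖S t v‖ ≤ ε * ‖v‖ := by
  let V := decaySubmodule S
  let u : ℝ → V →L[ℝ] E := fun t => ((S t).comp V.subtype).toContinuousLinearMap
  have hu : Tendsto (fun t => ‖u t‖) atTop (𝓝 0) := tendsto_zero_iff_norm_tendsto_zero.mp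
    (ContinuousLinearMap.tendsto_nhds_zero_of_forall_tendsto_apply (u := u) fun v : V => v.2)
  filter_upwards [hu.eventually (eventually_le_nhds hε)] with t ht v hv
  calc ‖S t v‖ = ‖u t ⟨v, hv⟩‖ := rfl
    _ ≤ ‖u t‖ * ‖v‖ := (u t).le_opNorm ⟨v, hv⟩
    _ ≤ ε * ‖v‖ := by gcongr

theorem exists_norm_apply_add_le_half (hS : ∀ s t, S (s + t) = S s * S t) {v : E}
    (hv : v ∈ decaySubmodule S) : ∃ T > 0, ∀ t, ‖S (t + T) v‖ ≤ 2⁻¹ * ‖S t v‖ := by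
  obtain ⟨T, hT, hTpos⟩ := ((eventually_norm_apply_le_of_mem_decaySubmodule (S := S)
    (by norm_num : (0 : ℝ) < 2⁻¹)).and (eventually_gt_atTop 0)).exists
  refine ⟨T, hTpos, fun t => ?_⟩
  rw [add_comm, hS, Module.End.mul_apply]
  exact hT _ (apply_mem_decaySubmodule hS hv t)

theorem integrableOn_Ioi_apply_of_tendsto_zero (hS : ∀ s t, S (s + t) = S s * S t) {v : E}
    (hcont : Continuous fun t => S t v) (hv : Tendsto (fun t => S t v) atTop (𝓝 0)) :
    IntegrableOn (fun t => S t v) (Ioi 0) := by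
  obtain ⟨T, hT, hstep⟩ := exists_norm_apply_add_le_half hS hv
  exact integrableOn_Ioi_of_isBigO_exp (div_neg_of_neg_of_pos (log_neg (by norm_num)
    (by norm_num)) hT) hcont.continuousOn
    (isBigO_exp_of_norm_add_le hT (by norm_num) (by norm_num) hcont.continuousOn
      fun t _ => hstep t)

end Semigroup

namespace Matrix

variable {R : Type*} [Fintype R] [DecidableEq R]

section Derivative

-- `NormedSpace.exp` only sees the topology, which every matrix norm induces.
attribute [local instance] Matrix.linftyOpNormedAddCommGroup Matrix.linftyOpNormedRing
  Matrix.linftyOpNormedAlgebra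

theorem hasDerivAt_exp_smul_mulVec (B : Matrix R R ℝ) (v : R → ℝ) (t : ℝ) :
    HasDerivAt (fun s : ℝ => NormedSpace.exp (s • B) *ᵥ v)
      (B *ᵥ (NormedSpace.exp (t • B) *ᵥ v)) t := by
  let L : Matrix R R ℝ →L[ℝ] R → ℝ :=
    (LinearMap.applyₗ v ∘ₗ toLin'.toLinearMap).toContinuousLinearMap
  rw [mulVec_mulVec]
  exact L.hasFDerivAt.comp_hasDerivAt t (hasDerivAt_exp_smul_const' B t)

end Derivative

theorem continuous_exp_smul_mulVec (B : Matrix R R ℝ) (v : R → ℝ) :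
    Continuous fun s : ℝ => NormedSpace.exp (s • B) *ᵥ v :=
  continuous_iff_continuousAt.2 fun t => (hasDerivAt_exp_smul_mulVec B v t).continuousAt

theorem mulVecLin_exp_add_smul (B : Matrix R R ℝ) (s t : ℝ) :
    (NormedSpace.exp ((s + t) • B)).mulVecLin =
      (NormedSpace.exp (s • B)).mulVecLin * (NormedSpace.exp (t • B)).mulVecLin := by
  rw [add_smul, exp_add_of_commute _ _ ((Commute.refl B).smul_left s |>.smul_right t),
    mulVecLin_mul]
  rfl

theorem integrableOn_Ioi_exp_smul_mulVec (B : Matrix R R ℝ) {v : R → ℝ}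
    (hv : Tendsto (fun t : ℝ => NormedSpace.exp (t • B) *ᵥ v) atTop (𝓝 0)) :
    IntegrableOn (fun t : ℝ => NormedSpace.exp (t • B) *ᵥ v) (Ioi 0) :=
  integrableOn_Ioi_apply_of_tendsto_zero (S := fun t => (NormedSpace.exp (t • B)).mulVecLin)
    (mulVecLin_exp_add_smul B) (continuous_exp_smul_mulVec B v) hv

theorem mulVec_integral_exp_smul_mulVec (B : Matrix R R ℝ) {v : R → ℝ}
    (hv : Tendsto (fun t : ℝ => NormedSpace.exp (t • B) *ᵥ v) atTop (𝓝 0)) :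
    B *ᵥ ∫ t in Ioi (0 : ℝ), NormedSpace.exp (t • B) *ᵥ v = -v := by
  have hint := integrableOn_Ioi_exp_smul_mulVec B hv
  have hcomm := B.mulVecLin.toContinuousLinearMap.integral_comp_comm hint
  have hftc := integral_Ioi_of_hasDerivAt_of_tendsto'
    (fun t _ => hasDerivAt_exp_smul_mulVec B v t)
    (B.mulVecLin.toContinuousLinearMap.integrable_comp hint) hv
  simp only [LinearMap.coe_toContinuousLinearMap', mulVecLin_apply] at hcomm
  rw [← hcomm, hftc]
  simp

theorem dotProduct_exp_smul_mulVec_eq_zero {B : Matrix R R ℝ} {μ v : R → ℝ} (hμB : μ ᵥ* B = 0)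
    (hv : Tendsto (fun t : ℝ => NormedSpace.exp (t • B) *ᵥ v) atTop (𝓝 0)) (t : ℝ) :
    μ ⬝ᵥ (NormedSpace.exp (t • B) *ᵥ v) = 0 := by
  let φ : ℝ → ℝ := fun s => μ ⬝ᵥ (NormedSpace.exp (s • B) *ᵥ v)
  have hderiv : ∀ s, HasDerivAt φ 0 s := fun s => by
    have := (dotProductBilin ℝ ℝ μ).toContinuousLinearMap.hasFDerivAt.comp_hasDerivAt s
      (hasDerivAt_exp_smul_mulVec B v s)
    rwa [LinearMap.coe_toContinuousLinearMap', dotProductBilin_apply_apply, dotProduct_mulVec,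
      hμB, zero_dotProduct] at this
  have hconst : ∀ s, φ s = φ t := fun s =>
    is_const_of_deriv_eq_zero (fun s => (hderiv s).differentiableAt)
      (fun s => (hderiv s).deriv) s t
  have hlim : Tendsto φ atTop (𝓝 0) := by
    simpa [φ, Function.comp_def] using
      ((continuous_const.dotProduct continuous_id).tendsto 0).comp hv
  rw [show φ = fun _ => φ t from funext hconst] at hlim
  exact tendsto_nhds_unique tendsto_const_nhds hlim

end Matrix

theorem stmt_7_general {R : Type*} [Fintype R] [DecidableEq R]
    (B : Matrix R R ℝ) (μ g : R → ℝ)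
    (hμB : Matrix.vecMul μ B = 0)
    (hdecay : Filter.Tendsto (fun t : ℝ => (NormedSpace.exp (t • B)).mulVec g)
      Filter.atTop (nhds 0)) :
    B.mulVec (∫ s in Set.Ioi (0:ℝ), (NormedSpace.exp (s • B)).mulVec g) = -g ∧
    ∑ r, μ r * (∫ s in Set.Ioi (0:ℝ), (NormedSpace.exp (s • B)).mulVec g) r = 0 := by
  refine ⟨Matrix.mulVec_integral_exp_smul_mulVec B hdecay, ?_⟩
  have h := (dotProductBilin ℝ ℝ μ).toContinuousLinearMap.integral_comp_comm
    (Matrix.integrableOn_Ioi_exp_smul_mulVec B hdecay)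
  simp only [LinearMap.coe_toContinuousLinearMap', dotProductBilin_apply_apply,
    Matrix.dotProduct_exp_smul_mulVec_eq_zero hμB hdecay, integral_zero] at h
  exact h.symm

/-- Probabilistic representation of the solution of the Poisson equation: if B has
kernel spanned by 1, μB = 0, μg = 0, and e^{tB}g → 0 as t → ∞, then
Φ = ∫₀^∞ e^{sB} g ds satisfies BΦ = -g and μΦ = 0. -/
theorem stmt_7 {R : Type*} [Fintype R] [DecidableEq R]
    (B : Matrix R R ℝ) (μ g : R → ℝ)
    (hB1 : B.mulVec 1 = 0)
    (hker : LinearMap.ker B.mulVecLin = Submodule.span ℝ {(1 : R → ℝ)})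
    (hμ : ∀ r, 0 ≤ μ r) (hμ1 : ∑ r, μ r = 1)
    (hμB : Matrix.vecMul μ B = 0)
    (hg : ∑ r, μ r * g r = 0)
    (hdecay : Filter.Tendsto (fun t : ℝ => (NormedSpace.exp (t • B)).mulVec g)
      Filter.atTop (nhds 0)) :
    B.mulVec (∫ s in Set.Ioi (0:ℝ), (NormedSpace.exp (s • B)).mulVec g) = -g ∧
    ∑ r, μ r * (∫ s in Set.Ioi (0:ℝ), (NormedSpace.exp (s • B)).mulVec g) r = 0 :=
  stmt_7_general B μ g hμB hdecay
end

section
/- Let B be the generator of an irreducible continuous-time Markov chain on a finite state space R with stationary distribution μ, and suppose the solvability conditions μg = 0 hold for g : R → ℝ. The solution of the Poisson equation can be written as Φ = -(μ*μ + B*B)^{-1} B* g; i.e. this Φ satisfies BΦ = -g and μΦ = 0. -/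
open Matrix

/-!
Since `ker B = span {1}` and `μ B = 0`, rank–nullity gives `range B = ker μ`, so `-g = B Ψ` for
some `Ψ`, which can be normalized to `μ Ψ = 0` by subtracting a multiple of `1`. The quadratic form
of `M = μ*μ + B*B` is `(μ x)² + |B x|²`, which vanishes only on `ker μ ∩ span {1} = 0`, so `M` is
invertible; and `M Ψ = (μ Ψ) μ + Bᵀ B Ψ = -Bᵀ g`, i.e. `Ψ = -M⁻¹ Bᵀ g`.
-/

namespace Matrix

variable {n 𝕜 : Type*} [Fintype n]

theorem dotProduct_vecMulVec_add_transpose_mul_mulVec [CommRing 𝕜] (B : Matrix n n 𝕜)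
    (μ x : n → 𝕜) :
    x ⬝ᵥ (vecMulVec μ μ + Bᵀ * B) *ᵥ x = (μ ⬝ᵥ x) ^ 2 + (B *ᵥ x) ⬝ᵥ (B *ᵥ x) := by
  rw [add_mulVec, dotProduct_add, vecMulVec_mulVec, ← mulVec_mulVec, dotProduct_mulVec,
    vecMul_transpose]
  simp [dotProduct_comm x μ, sq]

section Field

variable [Field 𝕜] {B : Matrix n n 𝕜} {μ v : n → 𝕜}

theorem range_mulVecLin_eq_ker_dotProduct (hker : LinearMap.ker B.mulVecLin = 𝕜 ∙ v)
    (hμv : μ ⬝ᵥ v ≠ 0) (hμB : μ ᵥ* B = 0) :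
    LinearMap.range B.mulVecLin = LinearMap.ker (dotProductBilin 𝕜 𝕜 μ) := by
  have hv : v ≠ 0 := by rintro rfl; simp at hμv
  have hle : LinearMap.range B.mulVecLin ≤ LinearMap.ker (dotProductBilin 𝕜 𝕜 μ) := by
    rintro _ ⟨x, rfl⟩
    simp [dotProduct_mulVec, hμB]
  have hsurj : LinearMap.range (dotProductBilin 𝕜 𝕜 μ) = ⊤ :=
    LinearMap.range_eq_top.2 fun a => ⟨(a / (μ ⬝ᵥ v)) • v, by simp [div_mul_cancel₀ _ hμv]⟩
  have hB := LinearMap.finrank_range_add_finrank_ker B.mulVecLin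
  have hμ := LinearMap.finrank_range_add_finrank_ker (dotProductBilin 𝕜 𝕜 μ)
  rw [hker, finrank_span_singleton hv] at hB
  rw [hsurj, finrank_top, Module.finrank_self] at hμ
  exact Submodule.eq_of_le_of_finrank_eq hle (by omega)

theorem exists_mulVec_eq_and_dotProduct_eq_zero (hker : LinearMap.ker B.mulVecLin = 𝕜 ∙ v)
    (hμv : μ ⬝ᵥ v ≠ 0) (hμB : μ ᵥ* B = 0) {y : n → 𝕜} (hy : μ ⬝ᵥ y = 0) :
    ∃ x, B *ᵥ x = y ∧ μ ⬝ᵥ x = 0 := by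
  have hyr : y ∈ LinearMap.range B.mulVecLin := by
    rw [range_mulVecLin_eq_ker_dotProduct hker hμv hμB]
    exact hy
  obtain ⟨x, hx⟩ := hyr
  have hBv : B *ᵥ v = 0 := by
    simpa using (hker.ge (Submodule.mem_span_singleton_self v) : v ∈ LinearMap.ker B.mulVecLin)
  refine ⟨x - ((μ ⬝ᵥ x) / (μ ⬝ᵥ v)) • v, ?_, ?_⟩
  · simpa [mulVec_sub, mulVec_smul, hBv] using hx
  · simp [dotProduct_sub, div_mul_cancel₀ _ hμv]

theorem inv_vecMulVec_add_transpose_mul_mulVec [DecidableEq n]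
    (hM : IsUnit (vecMulVec μ μ + Bᵀ * B)) {x y : n → 𝕜} (hBx : B *ᵥ x = y) (hμx : μ ⬝ᵥ x = 0) :
    (vecMulVec μ μ + Bᵀ * B)⁻¹ *ᵥ (Bᵀ *ᵥ y) = x := by
  have := hM.invertible
  refine inv_mulVec_eq_vec ?_
  rw [add_mulVec, vecMulVec_mulVec, hμx, ← mulVec_mulVec, hBx]
  simp

end Field

section Ordered

variable [Field 𝕜] [LinearOrder 𝕜] [IsStrictOrderedRing 𝕜] [DecidableEq n]
  {B : Matrix n n 𝕜} {μ v : n → 𝕜}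

theorem isUnit_vecMulVec_add_transpose_mul (hker : LinearMap.ker B.mulVecLin = 𝕜 ∙ v)
    (hμv : μ ⬝ᵥ v ≠ 0) : IsUnit (vecMulVec μ μ + Bᵀ * B) := by
  rw [← mulVec_injective_iff_isUnit]
  refine (injective_iff_map_eq_zero (vecMulVec μ μ + Bᵀ * B).mulVecLin).2 fun x hx => ?_
  have hq := dotProduct_vecMulVec_add_transpose_mul_mulVec B μ x
  rw [mulVecLin_apply] at hx
  rw [hx, dotProduct_zero] at hq
  have hBB : 0 ≤ (B *ᵥ x) ⬝ᵥ (B *ᵥ x) := Finset.sum_nonneg fun i _ => mul_self_nonneg _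
  obtain ⟨hμx, hBx⟩ := (add_eq_zero_iff_of_nonneg (sq_nonneg _) hBB).1 hq.symm
  have hxker : x ∈ LinearMap.ker B.mulVecLin := dotProduct_self_eq_zero.1 hBx
  rw [hker, Submodule.mem_span_singleton] at hxker
  obtain ⟨c, rfl⟩ := hxker
  rw [dotProduct_smul, smul_eq_mul, sq_eq_zero_iff, mul_eq_zero] at hμx
  simp [hμx.resolve_right hμv]

end Ordered

end Matrix

theorem stmt_17_general {R : Type*} [Fintype R] [DecidableEq R]
    (B : Matrix R R ℝ) (μ g : R → ℝ)
    (hker : LinearMap.ker B.mulVecLin = Submodule.span ℝ {(1 : R → ℝ)})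
    (hμ1 : ∑ r, μ r = 1)
    (hμB : Matrix.vecMul μ B = 0)
    (hg : ∑ r, g r * μ r = 0) :
    B.mulVec (-(Matrix.vecMulVec μ μ + Bᵀ * B)⁻¹.mulVec (Bᵀ.mulVec g)) = -g ∧
    ∑ r, μ r * (-(Matrix.vecMulVec μ μ + Bᵀ * B)⁻¹.mulVec (Bᵀ.mulVec g)) r = 0 := by
  have hμone : μ ⬝ᵥ 1 ≠ 0 := by simp [dotProduct, hμ1]
  obtain ⟨Ψ, hBΨ, hμΨ⟩ := exists_mulVec_eq_and_dotProduct_eq_zero hker hμone hμB (y := -g)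
    (by simpa [dotProduct, mul_comm] using hg)
  have hΦ : -((vecMulVec μ μ + Bᵀ * B)⁻¹ *ᵥ (Bᵀ *ᵥ g)) = Ψ := by
    rw [← mulVec_neg, ← mulVec_neg]
    exact inv_vecMulVec_add_transpose_mul_mulVec (isUnit_vecMulVec_add_transpose_mul hker hμone)
      hBΨ hμΨ
  rw [hΦ]
  exact ⟨hBΨ, hμΨ⟩

/-- First representation of the diffusion operator: under the solvability conditions,
Φ = -(μ*μ + B*B)⁻¹ B* g solves the Poisson equation BΦ = -g with μΦ = 0. -/
theorem stmt_17 {R : Type*} [Fintype R] [DecidableEq R]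
    (B : Matrix R R ℝ) (μ g : R → ℝ)
    (hB1 : B.mulVec 1 = 0)
    (hker : LinearMap.ker B.mulVecLin = Submodule.span ℝ {(1 : R → ℝ)})
    (hμ : ∀ r, 0 ≤ μ r) (hμ1 : ∑ r, μ r = 1)
    (hμB : Matrix.vecMul μ B = 0)
    (hg : ∑ r, g r * μ r = 0) :
    B.mulVec (-(Matrix.vecMulVec μ μ + Bᵀ * B)⁻¹.mulVec (Bᵀ.mulVec g)) = -g ∧
    ∑ r, μ r * (-(Matrix.vecMulVec μ μ + Bᵀ * B)⁻¹.mulVec (Bᵀ.mulVec g)) r = 0 :=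
  stmt_17_general B μ g hker hμ1 hμB hg
end
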